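/- Let H be a weak Hopf algebra with antipode S and R = Im(Π^L). Then e = S(1_{(1)}) ⊗ 1_{(2)} is a separability idempotent for R: for all g ∈ H, Π^L(g) S(1_{(1)}) ⊗ 1_{(2)} = S(1_{(1)}) ⊗ 1_{(2)} Π^L(g), and moreover R is a subalgebra of H. -/

import Mathlib

open TensorProduct LinearMap MulOpposite

noncomputable section
namespace DK

variable (k : Type*) [CommRing k] (H : Type*) [Ring H] [Algebra k H]

/-- Given `u = Σ xᵢ ⊗ bᵢ ∈ H ⊗ B` and `ε : H → k`, the linear map `g ↦ Σ ε(xᵢ * g) • bᵢ`. -/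
def coPi (B : Type*) [AddCommGroup B] [Module k B] (ε : H →ₗ[k] k) (u : H ⊗[k] B) :
    H →ₗ[k] B :=
  ((TensorProduct.lid k B).toLinearMap
      ∘ₗ LinearMap.rTensor B (ε ∘ₗ LinearMap.mul' k H)
      ∘ₗ (TensorProduct.assoc k H H B).symm.toLinearMap
      ∘ₗ LinearMap.lTensor H (TensorProduct.comm k B H).toLinearMap
      ∘ₗ (TensorProduct.assoc k H B H).toLinearMap)
    ∘ₗ TensorProduct.mk k (H ⊗[k] B) H u

/-- Given `u = Σ bᵢ ⊗ xᵢ ∈ B ⊗ H` and `ε : H → k`, the linear map `g ↦ Σ ε(g * xᵢ) • bᵢ`. -/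
def coPiR (B : Type*) [AddCommGroup B] [Module k B] (ε : H →ₗ[k] k) (u : B ⊗[k] H) :
    H →ₗ[k] B :=
  ((TensorProduct.rid k B).toLinearMap
      ∘ₗ LinearMap.lTensor B (ε ∘ₗ LinearMap.mul' k H ∘ₗ (TensorProduct.comm k H H).toLinearMap)
      ∘ₗ (TensorProduct.assoc k B H H).toLinearMap)
    ∘ₗ TensorProduct.mk k (B ⊗[k] H) H u

variable (Δ : H →ₗ[k] H ⊗[k] H) (ε : H →ₗ[k] k)

/-- `Π^L(g) = ε(1₍₁₎ g) • 1₍₂₎`. -/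
def PiL : H →ₗ[k] H := coPi k H H ε (Δ 1)

/-- `Π^R(g) = ε(g 1₍₂₎) • 1₍₁₎`. -/
def PiR : H →ₗ[k] H := coPiR k H H ε (Δ 1)

/-- the map `h₍₁₎ ε(g h₍₂₎)` as a function of the input of `Δ`, i.e.
`u = Σ aᵢ ⊗ bᵢ ↦ Σ ε(g bᵢ) • aᵢ`. -/
def PiRmap (g : H) : H ⊗[k] H →ₗ[k] H :=
  (TensorProduct.rid k H).toLinearMap ∘ₗ LinearMap.lTensor H (ε ∘ₗ LinearMap.mulLeft k g)

/-- `(a ⊗ b) ↦ ε(x a) * ε(b z)`. -/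
def eps2 (x z : H) : H ⊗[k] H →ₗ[k] k :=
  (TensorProduct.lid k k).toLinearMap
    ∘ₗ TensorProduct.map (ε ∘ₗ LinearMap.mulLeft k x) (ε ∘ₗ LinearMap.mulRight k z)

/-- `(a ⊗ b) ↦ ε(a z) * ε(x b)`. -/
def eps2' (x z : H) : H ⊗[k] H →ₗ[k] k :=
  (TensorProduct.lid k k).toLinearMap
    ∘ₗ TensorProduct.map (ε ∘ₗ LinearMap.mulRight k z) (ε ∘ₗ LinearMap.mulLeft k x)

/-- The weak bialgebra axioms for `(H, ·, Δ, ε)`: `Δ` is a multiplicative coassociative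
counital coproduct, the weak counit axiom
`ε(xyz) = ε(x y₍₁₎) ε(y₍₂₎ z) = ε(x y₍₂₎) ε(y₍₁₎ z)` holds, and the weak unit axiom
`(Δ ⊗ id)Δ(1) = (Δ(1) ⊗ 1)(1 ⊗ Δ(1)) = (1 ⊗ Δ(1))(Δ(1) ⊗ 1)` holds. -/
def IsWeakBialgebra : Prop :=
  (∀ x y : H, Δ (x * y) = Δ x * Δ y) ∧
  (∀ h : H, (TensorProduct.assoc k H H H) ((LinearMap.rTensor H Δ) (Δ h)) =
      (LinearMap.lTensor H Δ) (Δ h)) ∧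
  (∀ h : H, (TensorProduct.lid k H) ((LinearMap.rTensor H ε) (Δ h)) = h) ∧
  (∀ h : H, (TensorProduct.rid k H) ((LinearMap.lTensor H ε) (Δ h)) = h) ∧
  (∀ x y z : H, ε (x * y * z) = eps2 k H ε x z (Δ y)) ∧
  (∀ x y z : H, ε (x * y * z) = eps2' k H ε x z (Δ y)) ∧
  ((LinearMap.lTensor H Δ) (Δ 1) =
      (TensorProduct.assoc k H H H) ((Δ 1) ⊗ₜ[k] (1 : H)) * ((1 : H) ⊗ₜ[k] (Δ 1))) ∧
  ((LinearMap.lTensor H Δ) (Δ 1) =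
      ((1 : H) ⊗ₜ[k] (Δ 1)) * (TensorProduct.assoc k H H H) ((Δ 1) ⊗ₜ[k] (1 : H)))

variable (S : H →ₗ[k] H)

/-- The weak Hopf algebra axioms: `H` is a weak bialgebra with antipode `S` satisfying
`h₍₁₎ S(h₍₂₎) = Π^L(h)`, `S(h₍₁₎) h₍₂₎ = Π^R(h)` and `S(h₍₁₎) h₍₂₎ S(h₍₃₎) = S(h)`. -/
def IsWeakHopf : Prop :=
  IsWeakBialgebra k H Δ ε ∧
  (∀ h : H, LinearMap.mul' k H ((LinearMap.lTensor H S) (Δ h)) = PiL k H Δ ε h) ∧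
  (∀ h : H, LinearMap.mul' k H ((LinearMap.rTensor H S) (Δ h)) = PiR k H Δ ε h) ∧
  (∀ h : H,
    (LinearMap.mul' k H ∘ₗ LinearMap.lTensor H (LinearMap.mul' k H))
        ((TensorProduct.map S (TensorProduct.map LinearMap.id S))
          ((LinearMap.lTensor H Δ) (Δ h))) = S h)

end DK
end


/-!
Write `e = S(1₁) ⊗ 1₂`. The key identity is `Π^L(h₁) ⊗ h₂ = e (1 ⊗ h)`: the left side equals
`Π^L(1₁) ⊗ 1₂ h` by the weak counit and weak unit axioms, and `Π^L(1₁) ⊗ 1₂ = e` by expanding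
`S(1₁)` with the antipode axioms. For `z = Π^L(g)` one has `Δ z = (z ⊗ 1) Δ 1` and
`Π^L(z a) = z Π^L(a)`, hence `(z ⊗ 1) e = (Π^L ⊗ id)((z ⊗ 1) Δ 1) = (Π^L ⊗ id)(Δ z) = e (1 ⊗ z)`.
The second identity also shows that `Im Π^L` is closed under multiplication, and `Π^L(1) = 1`
by the counit axiom.
-/

namespace DK

section Contractions

variable {k : Type*} [CommRing k] {H : Type*} [Ring H] [Algebra k H] (ε : H →ₗ[k] k)

section Module

variable {B C : Type*} [AddCommGroup B] [Module k B] [AddCommGroup C] [Module k C]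

@[simp] lemma coPi_tmul (a g : H) (b : B) : coPi k H B ε (a ⊗ₜ b) g = ε (a * g) • b := by
  simp [coPi]

@[simp] lemma coPi_add (u v : H ⊗[k] B) :
    coPi k H B ε (u + v) = coPi k H B ε u + coPi k H B ε v := by
  ext g
  simp [coPi]

@[simp] lemma coPi_zero : coPi k H B ε 0 = 0 := by
  ext g
  simp [coPi]

@[simp] lemma coPiR_tmul (a g : H) (b : B) : coPiR k H B ε (b ⊗ₜ a) g = ε (g * a) • b := by
  simp [coPiR]

@[simp] lemma coPiR_add (u v : B ⊗[k] H) :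
    coPiR k H B ε (u + v) = coPiR k H B ε u + coPiR k H B ε v := by
  ext g
  simp [coPiR]

@[simp] lemma coPiR_zero : coPiR k H B ε 0 = 0 := by
  ext g
  simp [coPiR]

lemma coPi_one (u : H ⊗[k] B) : coPi k H B ε u 1 = TensorProduct.lid k B (rTensor B ε u) := by
  induction u using TensorProduct.induction_on with
  | zero => simp
  | tmul a b => simp
  | add u v hu hv => simp [hu, hv]

lemma coPiR_one (u : B ⊗[k] H) : coPiR k H B ε u 1 = TensorProduct.rid k B (lTensor B ε u) := by
  induction u using TensorProduct.induction_on with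
  | zero => simp
  | tmul a b => simp
  | add u v hu hv => simp [hu, hv]

lemma coPi_congr (u : H ⊗[k] B) {x y : H} (hxy : ∀ a, ε (a * x) = ε (a * y)) :
    coPi k H B ε u x = coPi k H B ε u y := by
  induction u using TensorProduct.induction_on with
  | zero => simp
  | tmul a b => simp [hxy]
  | add u v hu hv => simp [hu, hv]

lemma map_coPi (f : B →ₗ[k] C) (u : H ⊗[k] B) (g : H) :
    f (coPi k H B ε u g) = coPi k H C ε (lTensor H f u) g := by
  induction u using TensorProduct.induction_on with
  | zero => simp
  | tmul a b => simp
  | add u v hu hv => simp [hu, hv]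

end Module

@[simp] lemma eps2_tmul (x z a b : H) :
    eps2 k H ε x z (a ⊗ₜ b) = ε (x * a) * ε (b * z) := by
  simp [eps2]

@[simp] lemma eps2'_tmul (x z a b : H) :
    eps2' k H ε x z (a ⊗ₜ b) = ε (a * z) * ε (x * b) := by
  simp [eps2']

lemma counit_mul_coPi (a g : H) (u : H ⊗[k] H) :
    ε (a * coPi k H H ε u g) = eps2' k H ε a g u := by
  induction u using TensorProduct.induction_on with
  | zero => simp
  | tmul b c => simp [mul_comm]
  | add u v hu hv => simp [mul_add, hu, hv]

lemma counit_mul_rid_lTensor (a x : H) (u : H ⊗[k] H) :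
    ε (a * TensorProduct.rid k H (lTensor H (ε ∘ₗ mulRight k x) u)) = eps2 k H ε a x u := by
  induction u using TensorProduct.induction_on with
  | zero => simp
  | tmul b c => simp [mul_comm]
  | add u v hu hv => simp [mul_add, hu, hv]

lemma coPi_assoc_mul (u v : H ⊗[k] H) (g : H) :
    coPi k H (H ⊗[k] H) ε (TensorProduct.assoc k H H H (u ⊗ₜ 1) * (1 ⊗ₜ v)) g =
      (coPi k H H ε u g ⊗ₜ 1) * v := by
  induction u using TensorProduct.induction_on with
  | zero => simp
  | tmul a b =>
    induction v using TensorProduct.induction_on with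
    | zero => simp
    | tmul c d => simp [Algebra.TensorProduct.tmul_mul_tmul, smul_tmul']
    | add v w hv hw => simp only [tmul_add, mul_add, coPi_add, LinearMap.add_apply, hv, hw]
  | add u w hu hw => simp [add_tmul, add_mul, hu, hw]

lemma coPi_mul_assoc (u v : H ⊗[k] H) (g : H) :
    coPi k H (H ⊗[k] H) ε ((1 ⊗ₜ v) * TensorProduct.assoc k H H H (u ⊗ₜ 1)) g =
      v * (coPi k H H ε u g ⊗ₜ 1) := by
  induction u using TensorProduct.induction_on with
  | zero => simp
  | tmul a b =>
    induction v using TensorProduct.induction_on with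
    | zero => simp
    | tmul c d => simp [Algebra.TensorProduct.tmul_mul_tmul, smul_tmul']
    | add v w hv hw => simp only [tmul_add, add_mul, coPi_add, LinearMap.add_apply, hv, hw]
  | add u w hu hw => simp [add_tmul, mul_add, hu, hw]

lemma mul_coPiR (x a : H) (u : H ⊗[k] H) :
    x * coPiR k H H ε u a = coPiR k H H ε ((x ⊗ₜ 1) * u) a := by
  induction u using TensorProduct.induction_on with
  | zero => simp
  | tmul b c => simp [Algebra.TensorProduct.tmul_mul_tmul]
  | add u v hu hv => simp [mul_add, hu, hv]

lemma coPiR_mul (x a : H) (u : H ⊗[k] H) :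
    coPiR k H H ε u a * x = coPiR k H H ε (u * (x ⊗ₜ 1)) a := by
  induction u using TensorProduct.induction_on with
  | zero => simp
  | tmul b c => simp [Algebra.TensorProduct.tmul_mul_tmul]
  | add u v hu hv => simp [add_mul, hu, hv]

/-- `a ⊗ b ⊗ c ↦ ε(b) • a ⊗ c`. -/
def counitMid : H ⊗[k] (H ⊗[k] H) →ₗ[k] H ⊗[k] H :=
  lTensor H ((TensorProduct.lid k H).toLinearMap ∘ₗ rTensor H ε)

lemma counitMid_mul_assoc (u v : H ⊗[k] H) :
    counitMid ε ((1 ⊗ₜ v) * TensorProduct.assoc k H H H (u ⊗ₜ 1)) =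
      lTensor H (coPi k H H ε v) u := by
  induction u using TensorProduct.induction_on with
  | zero => simp
  | tmul a b =>
    induction v using TensorProduct.induction_on with
    | zero => simp
    | tmul c d => simp [counitMid, Algebra.TensorProduct.tmul_mul_tmul, tmul_smul]
    | add v w hv hw => simp only [tmul_add, add_mul, map_add, hv, hw, coPi_add, lTensor_add,
        LinearMap.add_apply]
  | add u w hu hw => simp only [add_tmul, mul_add, map_add, hu, hw]

/-- `(a ⊗ b) ⊗ (c ⊗ d) ↦ ε(b c) • a ⊗ d`. -/
def contractMid : (H ⊗[k] H) ⊗[k] (H ⊗[k] H) →ₗ[k] H ⊗[k] H :=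
  (TensorProduct.lid k (H ⊗[k] H)).toLinearMap
    ∘ₗ rTensor (H ⊗[k] H) (ε ∘ₗ mul' k H)
    ∘ₗ (tensorTensorTensorComm k H H H H).toLinearMap
    ∘ₗ rTensor (H ⊗[k] H) (TensorProduct.comm k H H).toLinearMap

@[simp] lemma contractMid_tmul (a b c d : H) :
    contractMid ε ((a ⊗ₜ b) ⊗ₜ (c ⊗ₜ d)) = ε (b * c) • (a ⊗ₜ[k] d) := by
  simp [contractMid]

lemma contractMid_tmul_tmul (u : H ⊗[k] H) (x y : H) :
    contractMid ε (u ⊗ₜ (x ⊗ₜ y)) =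
      TensorProduct.rid k H (lTensor H (ε ∘ₗ mulRight k x) u) ⊗ₜ y := by
  induction u using TensorProduct.induction_on with
  | zero => simp
  | tmul a b => simp [smul_tmul']
  | add u v hu hv => simp [add_tmul, hu, hv]

lemma contractMid_eq_counitMid (u v : H ⊗[k] H) :
    contractMid ε (u ⊗ₜ v) =
      counitMid ε (TensorProduct.assoc k H H H (u ⊗ₜ 1) * (1 ⊗ₜ v)) := by
  induction u using TensorProduct.induction_on with
  | zero => simp
  | tmul a b =>
    induction v using TensorProduct.induction_on with
    | zero => simp
    | tmul c d => simp [counitMid, Algebra.TensorProduct.tmul_mul_tmul, tmul_smul]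
    | add x y hx hy => simp only [tmul_add, mul_add, map_add, hx, hy]
  | add x y hx hy => simp only [add_tmul, map_add, add_mul, hx, hy]

end Contractions

section TensorAlgebra

variable {k : Type*} [CommRing k] {H : Type*} [Ring H] [Algebra k H]

lemma rTensor_mulLeft (x : H) (u : H ⊗[k] H) : rTensor H (mulLeft k x) u = (x ⊗ₜ 1) * u := by
  rw [← mulLeft_apply (R := k), mulLeft_tmul, mulLeft_one]
  rfl

lemma lTensor_mulRight (x : H) (u : H ⊗[k] H) : lTensor H (mulRight k x) u = u * (1 ⊗ₜ x) := by
  rw [← mulRight_apply (R := k), mulRight_tmul, mulRight_one]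
  rfl

lemma rTensor_mul_one_tmul (f : H →ₗ[k] H) (u : H ⊗[k] H) (h : H) :
    rTensor H f (u * (1 ⊗ₜ h)) = rTensor H f u * (1 ⊗ₜ h) := by
  rw [← lTensor_mulRight, ← lTensor_mulRight, ← LinearMap.comp_apply, rTensor_comp_lTensor,
    ← lTensor_comp_rTensor, LinearMap.comp_apply]

lemma assoc_symm_assoc_mul (u : H ⊗[k] H) (c d : H) :
    (TensorProduct.assoc k H H H).symm
        (TensorProduct.assoc k H H H (u ⊗ₜ 1) * (1 ⊗ₜ (c ⊗ₜ d))) = (u * (1 ⊗ₜ c)) ⊗ₜ d := by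
  induction u using TensorProduct.induction_on with
  | zero => simp
  | tmul a b => simp [Algebra.TensorProduct.tmul_mul_tmul]
  | add x y hx hy => simp only [add_tmul, map_add, add_mul, hx, hy]

lemma mul'_lTensor_tmul_one_mul (f : H →ₗ[k] H) (z : H) (u : H ⊗[k] H) :
    mul' k H (lTensor H f ((z ⊗ₜ 1) * u)) = z * mul' k H (lTensor H f u) := by
  induction u using TensorProduct.induction_on with
  | zero => simp
  | tmul a b => simp [Algebra.TensorProduct.tmul_mul_tmul, mul_assoc]
  | add x y hx hy => simp [mul_add, hx, hy]

lemma mul'_map_mul'_lTensor_assoc (f : H →ₗ[k] H) (z b : H) (u : H ⊗[k] H) :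
    mul' k H (map f (mul' k H ∘ₗ lTensor H f ∘ₗ mulRight k (z ⊗ₜ 1))
      (TensorProduct.assoc k H H H (u ⊗ₜ b))) = mul' k H (rTensor H f u) * z * f b := by
  induction u using TensorProduct.induction_on with
  | zero => simp
  | tmul a c => simp [Algebra.TensorProduct.tmul_mul_tmul, mul_assoc]
  | add x y hx hy => simp only [add_tmul, map_add, add_mul, hx, hy]

end TensorAlgebra

section WeakBialgebra

variable {k : Type*} [CommRing k] {H : Type*} [Ring H] [Algebra k H]
  {Δ : H →ₗ[k] H ⊗[k] H} {ε : H →ₗ[k] k}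

namespace IsWeakBialgebra

variable (hB : IsWeakBialgebra k H Δ ε)
include hB

lemma comul_mul (x y : H) : Δ (x * y) = Δ x * Δ y := hB.1 x y

lemma coassoc (h : H) :
    TensorProduct.assoc k H H H (rTensor H Δ (Δ h)) = lTensor H Δ (Δ h) := hB.2.1 h

lemma lid_rTensor_counit_comul (h : H) : TensorProduct.lid k H (rTensor H ε (Δ h)) = h :=
  hB.2.2.1 h

lemma rid_lTensor_counit_comul (h : H) : TensorProduct.rid k H (lTensor H ε (Δ h)) = h :=
  hB.2.2.2.1 h

lemma counit_mul_mul (x y z : H) : ε (x * y * z) = eps2 k H ε x z (Δ y) := hB.2.2.2.2.1 x y z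

lemma counit_mul_mul' (x y z : H) : ε (x * y * z) = eps2' k H ε x z (Δ y) :=
  hB.2.2.2.2.2.1 x y z

lemma lTensor_comul_comul_one :
    lTensor H Δ (Δ 1) = TensorProduct.assoc k H H H (Δ 1 ⊗ₜ 1) * (1 ⊗ₜ Δ 1) :=
  hB.2.2.2.2.2.2.1

lemma lTensor_comul_comul_one' :
    lTensor H Δ (Δ 1) = (1 ⊗ₜ Δ 1) * TensorProduct.assoc k H H H (Δ 1 ⊗ₜ 1) :=
  hB.2.2.2.2.2.2.2

lemma comul_one_mul (h : H) : Δ 1 * Δ h = Δ h := by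
  rw [← hB.comul_mul, one_mul]

lemma comul_mul_comul_one (h : H) : Δ h * Δ 1 = Δ h := by
  rw [← hB.comul_mul, mul_one]

lemma counitMid_lTensor_comul (u : H ⊗[k] H) : counitMid ε (lTensor H Δ u) = u := by
  induction u using TensorProduct.induction_on with
  | zero => simp
  | tmul a b => simp [counitMid, hB.lid_rTensor_counit_comul b]
  | add x y hx hy => simp only [map_add, hx, hy]

lemma lTensor_comul_mul_one_tmul (u : H ⊗[k] H) (h : H) :
    lTensor H Δ u * (1 ⊗ₜ Δ h) = lTensor H Δ (u * (1 ⊗ₜ h)) := by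
  induction u using TensorProduct.induction_on with
  | zero => simp
  | tmul a b => simp [Algebra.TensorProduct.tmul_mul_tmul, hB.comul_mul]
  | add x y hx hy => simp only [map_add, add_mul, hx, hy]

lemma PiL_one : PiL k H Δ ε 1 = 1 := by
  rw [PiL, coPi_one, hB.lid_rTensor_counit_comul]

lemma PiR_one : PiR k H Δ ε 1 = 1 := by
  rw [PiR, coPiR_one, hB.rid_lTensor_counit_comul]

lemma counit_mul_PiL (a g : H) : ε (a * PiL k H Δ ε g) = ε (a * g) := by
  rw [PiL, counit_mul_coPi, ← hB.counit_mul_mul', mul_one]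

lemma PiL_mul_PiL (h g : H) : PiL k H Δ ε (h * PiL k H Δ ε g) = PiL k H Δ ε (h * g) :=
  coPi_congr ε _ fun a => by rw [← mul_assoc, ← mul_assoc, hB.counit_mul_PiL]

lemma PiL_rid_lTensor_comul (c x : H) :
    PiL k H Δ ε (TensorProduct.rid k H (lTensor H (ε ∘ₗ mulRight k x) (Δ c))) =
      PiL k H Δ ε (c * x) :=
  coPi_congr ε _ fun a => by rw [counit_mul_rid_lTensor, ← hB.counit_mul_mul, mul_assoc]

lemma comul_PiL (g : H) : Δ (PiL k H Δ ε g) = (PiL k H Δ ε g ⊗ₜ 1) * Δ 1 := by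
  rw [PiL, map_coPi, hB.lTensor_comul_comul_one, coPi_assoc_mul]

lemma comul_PiL' (g : H) : Δ (PiL k H Δ ε g) = Δ 1 * (PiL k H Δ ε g ⊗ₜ 1) := by
  rw [PiL, map_coPi, hB.lTensor_comul_comul_one', coPi_mul_assoc]

lemma PiL_tmul_one_mul_comul_one_comm (g : H) :
    (PiL k H Δ ε g ⊗ₜ 1) * Δ 1 = Δ 1 * (PiL k H Δ ε g ⊗ₜ 1) :=
  (hB.comul_PiL g).symm.trans (hB.comul_PiL' g)

lemma PiL_mul_PiR_comm (g a : H) :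
    PiL k H Δ ε g * PiR k H Δ ε a = PiR k H Δ ε a * PiL k H Δ ε g := by
  rw [PiR, mul_coPiR, coPiR_mul, hB.PiL_tmul_one_mul_comul_one_comm]

lemma lTensor_PiL_comul_one : lTensor H (PiL k H Δ ε) (Δ 1) = Δ 1 := by
  have h := hB.counitMid_lTensor_comul (Δ 1)
  rwa [hB.lTensor_comul_comul_one', counitMid_mul_assoc] at h

lemma contractMid_comul_one_tmul_comul (h : H) :
    contractMid ε (Δ 1 ⊗ₜ Δ h) = Δ 1 * (1 ⊗ₜ h) := by
  calc contractMid ε (Δ 1 ⊗ₜ Δ h)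
      = counitMid ε (TensorProduct.assoc k H H H (Δ 1 ⊗ₜ 1) * (1 ⊗ₜ Δ 1) * (1 ⊗ₜ Δ h)) := by
        rw [contractMid_eq_counitMid, mul_assoc, Algebra.TensorProduct.tmul_mul_tmul, one_mul,
          hB.comul_one_mul]
    _ = Δ 1 * (1 ⊗ₜ h) := by
        rw [← hB.lTensor_comul_comul_one, hB.lTensor_comul_mul_one_tmul,
          hB.counitMid_lTensor_comul]

lemma rTensor_PiL_contractMid_comul_one (v : H ⊗[k] H) :
    rTensor H (PiL k H Δ ε) (contractMid ε (Δ 1 ⊗ₜ v)) = rTensor H (PiL k H Δ ε) v := by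
  induction v using TensorProduct.induction_on with
  | zero => simp
  | tmul x y =>
    rw [contractMid_tmul_tmul, rTensor_tmul, rTensor_tmul, hB.PiL_rid_lTensor_comul, one_mul]
  | add v w hv hw => simp only [tmul_add, map_add, hv, hw]

/-- `Π^L(h₁) ⊗ h₂ = Π^L(1₁) ε(1₂ h₁) ⊗ h₂`, and `ε(1₂ h₁) 1₁ ⊗ h₂ = 1₁ ⊗ 1₂ h`. -/
lemma rTensor_PiL_comul (h : H) :
    rTensor H (PiL k H Δ ε) (Δ h) = rTensor H (PiL k H Δ ε) (Δ 1) * (1 ⊗ₜ h) := by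
  rw [← hB.rTensor_PiL_contractMid_comul_one, hB.contractMid_comul_one_tmul_comul,
    rTensor_mul_one_tmul]

end IsWeakBialgebra

end WeakBialgebra

section WeakHopf

variable {k : Type*} [CommRing k] {H : Type*} [Ring H] [Algebra k H]
  {Δ : H →ₗ[k] H ⊗[k] H} {ε : H →ₗ[k] k} {S : H →ₗ[k] H}

namespace IsWeakHopf

variable (hS : IsWeakHopf k H Δ ε S)
include hS

lemma isWeakBialgebra : IsWeakBialgebra k H Δ ε := hS.1

lemma mul'_lTensor_antipode_comul (h : H) : mul' k H (lTensor H S (Δ h)) = PiL k H Δ ε h :=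
  hS.2.1 h

lemma mul'_rTensor_antipode_comul (h : H) : mul' k H (rTensor H S (Δ h)) = PiR k H Δ ε h :=
  hS.2.2.1 h

lemma antipode_mul_mul_antipode (h : H) :
    (mul' k H ∘ₗ lTensor H (mul' k H)) (map S (map LinearMap.id S) (lTensor H Δ (Δ h))) =
      S h :=
  hS.2.2.2 h

lemma PiL_PiL_mul (g h : H) :
    PiL k H Δ ε (PiL k H Δ ε g * h) = PiL k H Δ ε g * PiL k H Δ ε h := by
  have hB := hS.isWeakBialgebra
  rw [← hS.mul'_lTensor_antipode_comul, hB.comul_mul, hB.comul_PiL, mul_assoc, hB.comul_one_mul,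
    mul'_lTensor_tmul_one_mul, hS.mul'_lTensor_antipode_comul]

lemma PiL_mul_PiL_eq_mul' (h g : H) :
    PiL k H Δ ε (h * PiL k H Δ ε g) =
      mul' k H (lTensor H S (Δ h * (PiL k H Δ ε g ⊗ₜ 1))) := by
  have hB := hS.isWeakBialgebra
  rw [← hS.mul'_lTensor_antipode_comul, hB.comul_mul, hB.comul_PiL,
    hB.PiL_tmul_one_mul_comul_one_comm, ← mul_assoc, hB.comul_mul_comul_one]

lemma mul'_map_antipode_PiL_comul (h : H) : mul' k H (map S (PiL k H Δ ε) (Δ h)) = S h := by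
  rw [← hS.antipode_mul_mul_antipode]
  induction Δ h using TensorProduct.induction_on with
  | zero => simp
  | tmul a b =>
    simp [← hS.mul'_lTensor_antipode_comul b]
    rfl
  | add x y hx hy => simp only [map_add, hx, hy]

lemma mul'_map_PiR_antipode_comul (h : H) : mul' k H (map (PiR k H Δ ε) S (Δ h)) = S h := by
  have hassoc : ∀ w : (H ⊗[k] H) ⊗[k] H,
      (mul' k H ∘ₗ lTensor H (mul' k H))
          (map S (map LinearMap.id S) (TensorProduct.assoc k H H H w)) =
        mul' k H (map (mul' k H ∘ₗ rTensor H S) S w) := by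
    intro w
    induction w using TensorProduct.induction_on with
    | zero => simp
    | tmul v c =>
      induction v using TensorProduct.induction_on with
      | zero => simp
      | tmul a b => simp [mul_assoc]
      | add x y hx hy => simp only [add_tmul, map_add, hx, hy]
    | add x y hx hy => simp only [map_add, hx, hy]
  rw [← hS.antipode_mul_mul_antipode, ← hS.isWeakBialgebra.coassoc, hassoc]
  induction Δ h using TensorProduct.induction_on with
  | zero => simp
  | tmul a b => simp [hS.mul'_rTensor_antipode_comul a]
  | add x y hx hy => simp only [map_add, hx, hy]

lemma antipode_one : S 1 = 1 := by
  rw [← hS.mul'_map_antipode_PiL_comul, ← rTensor_comp_lTensor, comp_apply,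
    hS.isWeakBialgebra.lTensor_PiL_comul_one, hS.mul'_rTensor_antipode_comul,
    hS.isWeakBialgebra.PiR_one]

/-- `S(h₁) Π^L(h₂ z) = S(h₁) h₂ z S(h₃) = Π^R(h₁) z S(h₂) = z Π^R(h₁) S(h₂)` for `z ∈ Im Π^L`. -/
lemma mul'_map_antipode_PiL_mulRight_PiL (h g : H) :
    mul' k H (map S (PiL k H Δ ε ∘ₗ mulRight k (PiL k H Δ ε g)) (Δ h)) =
      PiL k H Δ ε g * S h := by
  have hB := hS.isWeakBialgebra
  set z := PiL k H Δ ε g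
  set F := mul' k H ∘ₗ lTensor H S ∘ₗ mulRight k (z ⊗ₜ[k] (1 : H))
  have hF : PiL k H Δ ε ∘ₗ mulRight k z = F ∘ₗ Δ := by
    ext x
    exact hS.PiL_mul_PiL_eq_mul' x g
  have hcontract : ∀ w : H ⊗[k] H,
      mul' k H (map S F (TensorProduct.assoc k H H H (rTensor H Δ w))) =
        z * mul' k H (map (PiR k H Δ ε) S w) := by
    intro w
    induction w using TensorProduct.induction_on with
    | zero => simp
    | tmul a b =>
      rw [rTensor_tmul, mul'_map_mul'_lTensor_assoc, hS.mul'_rTensor_antipode_comul,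
        ← hB.PiL_mul_PiR_comm, map_tmul, mul'_apply, mul_assoc]
    | add x y hx hy => simp only [map_add, hx, hy, mul_add]
  rw [hF, ← LinearMap.comp_id S, ← map_comp_lTensor, LinearMap.comp_id, comp_apply,
    ← hB.coassoc, hcontract, hS.mul'_map_PiR_antipode_comul]

/-- `S(1₁) ⊗ 1₂ = S(1₁) Π^L(1₂) ⊗ 1₃ = S(1₁) Π^L(1₂ 1'₁) ⊗ 1'₂` by the weak unit axiom, and
`S(1₁) Π^L(1₂ c) = S(1₁) Π^L(1₂ Π^L(c)) = Π^L(c)`. -/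
lemma rTensor_PiL_comul_one : rTensor H (PiL k H Δ ε) (Δ 1) = rTensor H S (Δ 1) := by
  have hB := hS.isWeakBialgebra
  set F := mul' k H ∘ₗ map S (PiL k H Δ ε)
  have hF : F ∘ₗ Δ = S := LinearMap.ext hS.mul'_map_antipode_PiL_comul
  have hsplit : ∀ v : H ⊗[k] H,
      rTensor H F ((TensorProduct.assoc k H H H).symm
        (TensorProduct.assoc k H H H (Δ 1 ⊗ₜ 1) * (1 ⊗ₜ v))) = rTensor H (PiL k H Δ ε) v := by
    intro v
    induction v using TensorProduct.induction_on with
    | zero => simp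
    | tmul c d =>
      have hc : PiL k H Δ ε ∘ₗ mulRight k c = PiL k H Δ ε ∘ₗ mulRight k (PiL k H Δ ε c) := by
        ext x
        exact (hB.PiL_mul_PiL x c).symm
      rw [assoc_symm_assoc_mul, rTensor_tmul, rTensor_tmul, ← lTensor_mulRight, comp_apply,
        ← comp_apply (map S _), map_comp_lTensor, hc, hS.mul'_map_antipode_PiL_mulRight_PiL,
        hS.antipode_one, mul_one]
    | add v w hv hw => simp only [tmul_add, mul_add, map_add, hv, hw]
  rw [← hsplit, ← hB.lTensor_comul_comul_one, ← hB.coassoc, LinearEquiv.symm_apply_apply,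
    ← comp_apply, ← rTensor_comp, hF]

lemma rTensor_PiL_comul_eq (h : H) :
    rTensor H (PiL k H Δ ε) (Δ h) = rTensor H S (Δ 1) * (1 ⊗ₜ h) := by
  rw [hS.isWeakBialgebra.rTensor_PiL_comul, hS.rTensor_PiL_comul_one]

lemma rTensor_PiL_tmul_one_mul (g : H) (u : H ⊗[k] H) :
    rTensor H (PiL k H Δ ε) ((PiL k H Δ ε g ⊗ₜ 1) * u) =
      (PiL k H Δ ε g ⊗ₜ 1) * rTensor H (PiL k H Δ ε) u := by
  induction u using TensorProduct.induction_on with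
  | zero => simp
  | tmul a b =>
    simp only [Algebra.TensorProduct.tmul_mul_tmul, rTensor_tmul, one_mul, hS.PiL_PiL_mul]
  | add v w hv hw => simp only [map_add, mul_add, hv, hw]

end IsWeakHopf

end WeakHopf

end DK

/-- For a weak Hopf algebra `H` with antipode `S` and `R = Im Π^L`,
the element `e = S(1₍₁₎) ⊗ 1₍₂₎` is a separability idempotent for `R`:
`Π^L(g) S(1₍₁₎) ⊗ 1₍₂₎ = S(1₍₁₎) ⊗ 1₍₂₎ Π^L(g)` for all `g ∈ H`; moreover `R` is a
subalgebra of `H` (it contains `1` and is closed under multiplication; it is an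
`R`-submodule, being the range of a linear map). -/
theorem stmt5 (k : Type*) [CommRing k] (H : Type*) [Ring H] [Algebra k H]
    (Δ : H →ₗ[k] H ⊗[k] H) (ε : H →ₗ[k] k) (S : H →ₗ[k] H)
    (hwh : DK.IsWeakHopf k H Δ ε S) :
    (∀ g : H,
      (LinearMap.rTensor H (LinearMap.mulLeft k (DK.PiL k H Δ ε g)))
          ((LinearMap.rTensor H S) (Δ 1)) =
        (LinearMap.lTensor H (LinearMap.mulRight k (DK.PiL k H Δ ε g)))
          ((LinearMap.rTensor H S) (Δ 1))) ∧
    (1 : H) ∈ Set.range (DK.PiL k H Δ ε) ∧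
    (∀ x y : H, x ∈ Set.range (DK.PiL k H Δ ε) → y ∈ Set.range (DK.PiL k H Δ ε) →
      x * y ∈ Set.range (DK.PiL k H Δ ε)) := by
  refine ⟨fun g => ?_, ⟨1, hwh.isWeakBialgebra.PiL_one⟩, ?_⟩
  · rw [DK.rTensor_mulLeft, DK.lTensor_mulRight, ← hwh.rTensor_PiL_comul_eq,
      ← hwh.rTensor_PiL_comul_one, ← hwh.rTensor_PiL_tmul_one_mul,
      ← hwh.isWeakBialgebra.comul_PiL]
  · rintro _ _ ⟨g, rfl⟩ ⟨h, rfl⟩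
    exact ⟨DK.PiL k H Δ ε g * h, hwh.PiL_PiL_mul g h⟩
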